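/- arXiv:1310.6572 — 2 statements merged into one kernel-verified Lean document; each statement's English description precedes it below -/
import Mathlib

section
/- The sylvester rewriting system is complete: it is noetherian and confluent, and its irreducible words are exactly the words of the form LRP(T) for binary search trees T, equivalently the lexicographically minimal representatives of elements of the sylvester monoid S_n. -/
/-- Labelled rooted binary trees. -/
inductive BinTree (α : Type*) where
  | leaf : BinTree α
  | node : BinTree α → α → BinTree α → BinTree α

namespace BinTree

/-- Insertion into a right strict binary search tree. -/
def insert {α : Type*} [LinearOrder α] (a : α) : BinTree α → BinTree α
  | leaf => node leaf a leaf
  | node l x r => if a ≤ x then node (insert a l) x r else node l x (insert a r)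

/-- The binary search tree of a word: insert the letters from right to left. -/
def treeOf {α : Type*} [LinearOrder α] (w : List α) : BinTree α :=
  w.foldr insert leaf

/-- Left-to-right postfix reading of a binary tree: left subtree, right subtree, root. -/
def lrp {α : Type*} : BinTree α → List α
  | leaf => []
  | node l a r => lrp l ++ lrp r ++ [a]

/-- The right strict binary search tree property: every label in the left subtree of a
node is `≤` its label, and every label in the right subtree is `>` its label. -/
def IsBST {α : Type*} [LinearOrder α] : BinTree α → Prop
  | leaf => True
  | node l a r => (∀ x ∈ lrp l, x ≤ a) ∧ (∀ x ∈ lrp r, a < x) ∧ IsBST l ∧ IsBST r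

end BinTree

/-- A word contains a sylvester left-hand side `c a v b` with `a ≤ b < c`. -/
def HasSylvFactor {α : Type*} [LinearOrder α] (w : List α) : Prop :=
  ∃ (p v s : List α) (a b c : α), a ≤ b ∧ b < c ∧ w = p ++ c :: a :: (v ++ b :: s)

/-- One step of sylvester rewriting: `c a v b → a c v b` for `a ≤ b < c`. -/
def SylvStep {α : Type*} [LinearOrder α] (u v : List α) : Prop :=
  ∃ (p m s : List α) (a b c : α), a ≤ b ∧ b < c ∧
    u = p ++ c :: a :: (m ++ b :: s) ∧ v = p ++ a :: c :: (m ++ b :: s)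

/-!
A rewriting step moves a letter left past a larger one, so it permutes the word and makes it
lexicographically smaller; since a word has finitely many anagrams, rewriting terminates.
An irreducible word `u b` has the form `u₁ u₂ b` with `u₁ ≤ b < u₂` letterwise and `u₁`, `u₂`
irreducible, so by induction it is the postfix reading of a binary search tree with root `b`;
in particular `lrp (treeOf w) = w` for irreducible `w`. As congruent words have the same tree,
congruent irreducible words coincide. This gives confluence and the lexicographic minimality of
irreducible words, and shows that `lrp T` is irreducible: a rewrite of `lrp T` would reduce to an
irreducible word with tree `T`, that is to `lrp T` itself, yet lexicographically smaller.
-/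

open BinTree Relation

section Rewriting

variable {α : Type*} [LinearOrder α] {u v w : List α}

theorem hasSylvFactor_iff_exists_sylvStep : HasSylvFactor w ↔ ∃ v, SylvStep w v := by
  constructor
  · rintro ⟨p, m, s, a, b, c, hab, hbc, rfl⟩
    exact ⟨_, p, m, s, a, b, c, hab, hbc, rfl, rfl⟩
  · rintro ⟨v, p, m, s, a, b, c, hab, hbc, rfl, -⟩
    exact ⟨p, m, s, a, b, c, hab, hbc, rfl⟩

theorem SylvStep.perm (h : SylvStep u v) : v.Perm u := by
  obtain ⟨p, m, s, a, b, c, -, -, rfl, rfl⟩ := h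
  exact (List.Perm.swap c a _).append_left p

theorem SylvStep.lt (h : SylvStep u v) : v < u := by
  obtain ⟨p, m, s, a, b, c, hab, hbc, rfl, rfl⟩ := h
  exact List.Lex.append_left _ (List.Lex.rel (hab.trans_lt hbc)) p

theorem lt_of_transGen_sylvStep (h : TransGen SylvStep u v) : v < u :=
  h.trans_induction_on SylvStep.lt fun _ _ h₁ h₂ ↦ h₂.trans h₁

theorem le_of_reflTransGen_sylvStep (h : ReflTransGen SylvStep u v) : v ≤ u := by
  rcases reflTransGen_iff_eq_or_transGen.1 h with rfl | h
  exacts [le_rfl, (lt_of_transGen_sylvStep h).le]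

theorem not_exists_sylvStep_chain : ¬∃ f : ℕ → List α, ∀ i, SylvStep (f i) (f (i + 1)) := by
  rintro ⟨f, hf⟩
  have hperm : ∀ i, (f i).Perm (f 0) := by
    intro i
    induction i with
    | zero => rfl
    | succ i ih => exact (SylvStep.perm (hf i)).trans ih
  obtain ⟨i, j, hij, hfij⟩ := Set.Finite.exists_lt_map_eq_of_forall_mem
    (f := f) (fun i ↦ List.mem_permutations.2 (hperm i)) (List.finite_toSet (f 0).permutations)
  exact (strictAnti_nat_of_succ_lt (fun i ↦ SylvStep.lt (hf i)) hij).ne' hfij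

theorem wellFounded_flip_sylvStep : WellFounded (flip (SylvStep (α := α))) :=
  wellFounded_iff_isEmpty_descending_chain.2 ⟨fun ⟨f, hf⟩ ↦ not_exists_sylvStep_chain ⟨f, hf⟩⟩

theorem exists_reflTransGen_sylvStep_not_hasSylvFactor (w : List α) :
    ∃ z, ReflTransGen SylvStep w z ∧ ¬HasSylvFactor z := by
  apply wellFounded_flip_sylvStep.induction w
  intro w ih
  by_cases h : HasSylvFactor w
  · obtain ⟨v, hv⟩ := hasSylvFactor_iff_exists_sylvStep.1 h
    obtain ⟨z, hvz, hz⟩ := ih v hv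
    exact ⟨z, .head hv hvz, hz⟩
  · exact ⟨w, .refl, h⟩

end Rewriting

namespace BinTree

variable {α : Type*} [LinearOrder α]

theorem foldr_insert_node_of_forall_le {b : α} (l r : BinTree α) :
    ∀ {u : List α}, (∀ x ∈ u, x ≤ b) →
      u.foldr BinTree.insert (node l b r) = node (u.foldr BinTree.insert l) b r
  | [], _ => rfl
  | x :: u, h => by
    rw [List.foldr_cons, foldr_insert_node_of_forall_le l r fun y hy ↦ h y (.tail x hy)]
    simp [BinTree.insert, h x (.head u)]

theorem foldr_insert_node_of_forall_lt {b : α} (l r : BinTree α) :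
    ∀ {u : List α}, (∀ x ∈ u, b < x) →
      u.foldr BinTree.insert (node l b r) = node l b (u.foldr BinTree.insert r)
  | [], _ => rfl
  | x :: u, h => by
    rw [List.foldr_cons, foldr_insert_node_of_forall_lt l r fun y hy ↦ h y (.tail x hy)]
    simp [BinTree.insert, (h x (.head u)).not_ge]

theorem treeOf_lrp_of_isBST : ∀ {T : BinTree α}, IsBST T → treeOf (lrp T) = T
  | leaf, _ => rfl
  | node l a r, ⟨hl, hr, hbl, hbr⟩ => by
    simp only [treeOf, lrp, List.foldr_append, List.foldr_cons, List.foldr_nil, BinTree.insert]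
    rw [foldr_insert_node_of_forall_lt _ _ hr, foldr_insert_node_of_forall_le _ _ hl]
    exact congrArg₂ (node · a ·) (treeOf_lrp_of_isBST hbl) (treeOf_lrp_of_isBST hbr)

end BinTree

theorem List.exists_eq_append_of_pairwise_imp {α : Type*} {P : α → Prop} {u : List α}
    (h : u.Pairwise fun c a ↦ P a → P c) :
    ∃ u₁ u₂, u = u₁ ++ u₂ ∧ (∀ x ∈ u₁, P x) ∧ ∀ x ∈ u₂, ¬P x := by
  induction u with
  | nil => exact ⟨[], [], rfl, by simp, by simp⟩
  | cons y u ih =>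
    obtain ⟨hy, hu⟩ := List.pairwise_cons.1 h
    by_cases hPy : P y
    · obtain ⟨u₁, u₂, rfl, h₁, h₂⟩ := ih hu
      exact ⟨y :: u₁, u₂, rfl, List.forall_mem_cons.2 ⟨hPy, h₁⟩, h₂⟩
    · exact ⟨[], y :: u, rfl, by simp,
        List.forall_mem_cons.2 ⟨hPy, fun x hx hPx ↦ hPy (hy x hx hPx)⟩⟩

section Irreducible

variable {α : Type*} [LinearOrder α] {u w : List α}

theorem HasSylvFactor.of_infix (huw : u <:+: w) (hu : HasSylvFactor u) : HasSylvFactor w := by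
  obtain ⟨x, y, rfl⟩ := huw
  obtain ⟨p, m, s, a, b, c, hab, hbc, rfl⟩ := hu
  exact ⟨x ++ p, m, s ++ y, a, b, c, hab, hbc, by simp⟩

/-- In an irreducible word `u b`, the letters `≤ b` of `u` all precede its letters `> b`: otherwise
some letter `> b` of `u` is immediately followed by one `≤ b`, and with the final `b` these form a
left-hand side. -/
theorem exists_eq_append_of_not_hasSylvFactor_append_singleton {b : α}
    (h : ¬HasSylvFactor (u ++ [b])) :
    ∃ u₁ u₂, u = u₁ ++ u₂ ∧ (∀ x ∈ u₁, x ≤ b) ∧ ∀ x ∈ u₂, b < x := by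
  let R : α → α → Prop := fun c a ↦ a ≤ b → c ≤ b
  have : Trans R R R := ⟨fun h₁ h₂ hx ↦ h₁ (h₂ hx)⟩
  have hchain : u.IsChain R := by
    refine List.isChain_iff_forall_rel_of_append_cons_cons.2 fun c a p s hu hab ↦ ?_
    by_contra! hbc
    exact h ⟨p, s, [], a, b, c, hab, hbc, by simp [hu]⟩
  simpa only [not_le] using List.exists_eq_append_of_pairwise_imp hchain.pairwise

theorem exists_isBST_lrp_eq_of_not_hasSylvFactor (w : List α) (hw : ¬HasSylvFactor w) :
    ∃ T : BinTree α, IsBST T ∧ w = lrp T := by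
  rcases w.eq_nil_or_concat' with rfl | ⟨u, b, rfl⟩
  · exact ⟨leaf, trivial, rfl⟩
  obtain ⟨u₁, u₂, rfl, hle, hlt⟩ := exists_eq_append_of_not_hasSylvFactor_append_singleton hw
  have h₁ : ¬HasSylvFactor u₁ := fun h ↦ hw (HasSylvFactor.of_infix ⟨[], u₂ ++ [b], by simp⟩ h)
  have h₂ : ¬HasSylvFactor u₂ := fun h ↦ hw (HasSylvFactor.of_infix ⟨u₁, [b], by simp⟩ h)
  obtain ⟨T₁, hT₁, rfl⟩ := exists_isBST_lrp_eq_of_not_hasSylvFactor u₁ h₁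
  obtain ⟨T₂, hT₂, rfl⟩ := exists_isBST_lrp_eq_of_not_hasSylvFactor u₂ h₂
  exact ⟨node T₁ b T₂, ⟨hle, hlt, hT₁, hT₂⟩, by simp [lrp]⟩
termination_by w.length
decreasing_by all_goals subst_vars; simp only [List.length_append, List.length_singleton]; omega

theorem lrp_treeOf_of_not_hasSylvFactor (hw : ¬HasSylvFactor w) : lrp (treeOf w) = w := by
  obtain ⟨T, hT, rfl⟩ := exists_isBST_lrp_eq_of_not_hasSylvFactor w hw
  rw [treeOf_lrp_of_isBST hT]

end Irreducible

section Congruence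

variable {α : Type*} [LinearOrder α]

theorem eq_of_eqvGen_of_not_hasSylvFactor
    (htree : ∀ w w' : List α, EqvGen SylvStep w w' → treeOf w = treeOf w')
    {z z' : List α} (h : EqvGen SylvStep z z') (hz : ¬HasSylvFactor z)
    (hz' : ¬HasSylvFactor z') : z = z' := by
  rw [← lrp_treeOf_of_not_hasSylvFactor hz, ← lrp_treeOf_of_not_hasSylvFactor hz', htree z z' h]

theorem join_reflTransGen_sylvStep
    (htree : ∀ w w' : List α, EqvGen SylvStep w w' → treeOf w = treeOf w')
    {u u' u'' : List α} (h' : ReflTransGen SylvStep u u') (h'' : ReflTransGen SylvStep u u'') :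
    Join (ReflTransGen SylvStep) u' u'' := by
  obtain ⟨z', hz', hirr'⟩ := exists_reflTransGen_sylvStep_not_hasSylvFactor u'
  obtain ⟨z'', hz'', hirr''⟩ := exists_reflTransGen_sylvStep_not_hasSylvFactor u''
  have hcongr : EqvGen SylvStep z' z'' :=
    .trans _ _ _ (.symm _ _ (EqvGen.reflTransGen_le_eqvGen _ _ _ (h'.trans hz')))
      (EqvGen.reflTransGen_le_eqvGen _ _ _ (h''.trans hz''))
  obtain rfl := eq_of_eqvGen_of_not_hasSylvFactor htree hcongr hirr' hirr''
  exact ⟨z', hz', hz''⟩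

theorem not_hasSylvFactor_lrp
    (htree : ∀ w w' : List α, EqvGen SylvStep w w' → treeOf w = treeOf w')
    {T : BinTree α} (hT : IsBST T) : ¬HasSylvFactor (lrp T) := by
  intro h
  obtain ⟨v, hv⟩ := hasSylvFactor_iff_exists_sylvStep.1 h
  obtain ⟨z, hvz, hz⟩ := exists_reflTransGen_sylvStep_not_hasSylvFactor v
  have hz_eq : z = lrp T := by
    rw [← lrp_treeOf_of_not_hasSylvFactor hz,
      ← htree _ _ (EqvGen.reflTransGen_le_eqvGen _ _ _ (.head hv hvz)), treeOf_lrp_of_isBST hT]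
  exact (lt_of_transGen_sylvStep (.head' hv hvz)).ne hz_eq

theorem not_hasSylvFactor_iff_forall_le
    (htree : ∀ w w' : List α, EqvGen SylvStep w w' → treeOf w = treeOf w') {w : List α} :
    ¬HasSylvFactor w ↔ ∀ w', EqvGen SylvStep w w' → w ≤ w' := by
  constructor
  · intro hw w' hww'
    obtain ⟨z, hw'z, hz⟩ := exists_reflTransGen_sylvStep_not_hasSylvFactor w'
    obtain rfl : w = z :=
      eq_of_eqvGen_of_not_hasSylvFactor htree
        (.trans _ _ _ hww' (EqvGen.reflTransGen_le_eqvGen _ _ _ hw'z)) hw hz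
    exact le_of_reflTransGen_sylvStep hw'z
  · intro hmin h
    obtain ⟨v, hv⟩ := hasSylvFactor_iff_exists_sylvStep.1 h
    exact (SylvStep.lt hv).not_ge (hmin v (.rel _ _ hv))

end Congruence

theorem sylvester_complete_general (n : ℕ)
    (hHNT₁ : ∀ w w' : List (Fin n),
      Relation.EqvGen SylvStep w w' ↔ BinTree.treeOf w = BinTree.treeOf w') :
    (¬ ∃ f : ℕ → List (Fin n), ∀ i, SylvStep (f i) (f (i + 1))) ∧
    (∀ u u' u'' : List (Fin n), Relation.ReflTransGen SylvStep u u' →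
      Relation.ReflTransGen SylvStep u u'' →
      ∃ v, Relation.ReflTransGen SylvStep u' v ∧ Relation.ReflTransGen SylvStep u'' v) ∧
    (∀ w : List (Fin n),
      (¬ HasSylvFactor w ↔ ∃ T : BinTree (Fin n), BinTree.IsBST T ∧ w = BinTree.lrp T) ∧
      (¬ HasSylvFactor w ↔ ∀ w', Relation.EqvGen SylvStep w w' →
        w = w' ∨ List.Lex (· < ·) w w')) := by
  have htree w w' : EqvGen SylvStep w w' → treeOf w = treeOf w' := (hHNT₁ w w').1
  refine ⟨not_exists_sylvStep_chain, fun u u' u'' ↦ join_reflTransGen_sylvStep htree,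
    fun w ↦ ⟨⟨exists_isBST_lrp_eq_of_not_hasSylvFactor w, ?_⟩, ?_⟩⟩
  · rintro ⟨T, hT, rfl⟩
    exact not_hasSylvFactor_lrp htree hT
  · simp only [not_hasSylvFactor_iff_forall_le htree, le_iff_eq_or_lt]
    rfl

/-- The sylvester rewriting system is complete: noetherian and confluent, and the
irreducible words are exactly the left-to-right postfix readings of binary search
trees, equivalently the lexicographically minimal representatives of elements of the
sylvester monoid. (The two hypotheses are the results of Hivert, Novelli & Thibon:
two words are congruent iff they have the same binary search tree, and `LRP(T(w))` is
lexicographically minimal in the congruence class of `w`.) -/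
theorem sylvester_complete (n : ℕ)
    (hHNT₁ : ∀ w w' : List (Fin n),
      Relation.EqvGen SylvStep w w' ↔ BinTree.treeOf w = BinTree.treeOf w')
    (hHNT₂ : ∀ w w' : List (Fin n), Relation.EqvGen SylvStep w w' →
      BinTree.lrp (BinTree.treeOf w) = w' ∨
        List.Lex (· < ·) (BinTree.lrp (BinTree.treeOf w)) w') :
    (¬ ∃ f : ℕ → List (Fin n), ∀ i, SylvStep (f i) (f (i + 1))) ∧
    (∀ u u' u'' : List (Fin n), Relation.ReflTransGen SylvStep u u' →
      Relation.ReflTransGen SylvStep u u'' →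
      ∃ v, Relation.ReflTransGen SylvStep u' v ∧ Relation.ReflTransGen SylvStep u'' v) ∧
    (∀ w : List (Fin n),
      (¬ HasSylvFactor w ↔ ∃ T : BinTree (Fin n), BinTree.IsBST T ∧ w = BinTree.lrp T) ∧
      (¬ HasSylvFactor w ↔ ∀ w', Relation.EqvGen SylvStep w w' →
        w = w' ∨ List.Lex (· < ·) w w')) :=
  sylvester_complete_general n hHNT₁
end

section
/- Let w be an irreducible word for the sylvester rewriting system and γ ∈ A. Every word reachable from γw by sylvester rewriting has the form u γ v with w = uv and γ strictly greater than every letter of u; moreover, if any rule cavb → acvb applies to uγv, then c is the distinguished occurrence of γ, a is the first letter of v, and b is a later letter of v. -/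
/-!
A sylvester factor `c a t` (with `a ≤ b < c` for some `b ∈ t`) of `u γ v`, where every letter
of `u` is `< γ` and `uv` is irreducible, must start at `γ`: if it started inside `u`, then
`b < c < γ`, so deleting `γ` would leave a factor of `uv`; if it started inside `v`, it would
be a factor of `uv` already. Hence the only rule that applies moves the first letter of `v`
(which is `≤ b < γ`) across `γ`, preserving the shape `u γ v` with `w = uv` and `u < γ`.
-/

section Sylvester

variable {α : Type*} [LinearOrder α]

theorem HasSylvFactor.of_mem {p t : List α} {a b c : α} (hab : a ≤ b) (hbc : b < c)
    (hb : b ∈ t) : HasSylvFactor (p ++ c :: a :: t) := by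
  obtain ⟨m, s, rfl⟩ := List.append_of_mem hb
  exact ⟨p, m, s, a, b, c, hab, hbc, rfl⟩

theorem HasSylvFactor.append_left {v : List α} (u : List α) (h : HasSylvFactor v) :
    HasSylvFactor (u ++ v) := by
  obtain ⟨p, m, s, a, b, c, hab, hbc, rfl⟩ := h
  exact ⟨u ++ p, m, s, a, b, c, hab, hbc, by simp⟩

theorem sylvFactor_starts_at_marked_letter {u v p t : List α} {γ a b c : α}
    (hirr : ¬ HasSylvFactor (u ++ v)) (hu : ∀ x ∈ u, x < γ) (hab : a ≤ b) (hbc : b < c)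
    (hb : b ∈ t) (heq : u ++ γ :: v = p ++ c :: a :: t) :
    p = u ∧ c = γ ∧ v = a :: t := by
  rcases List.append_eq_append_iff.mp heq with ⟨r, rfl, hr⟩ | ⟨r, rfl, hr⟩
  · rcases r with _ | ⟨_, r⟩
    · simp_all
    · obtain ⟨-, rfl⟩ := List.cons_eq_cons.mp hr
      exact (hirr ((HasSylvFactor.of_mem hab hbc hb).append_left _)).elim
  · rcases r with _ | ⟨d, r⟩
    · simp_all
    simp only [List.cons_append, List.cons.injEq] at hr
    obtain ⟨rfl, hr⟩ := hr
    have hbγ : b < γ := hbc.trans (hu c (by simp))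
    rcases r with _ | ⟨e, r⟩
    · simp only [List.nil_append, List.cons.injEq] at hr
      exact absurd (hab.trans_lt hbγ) (hr.1 ▸ lt_irrefl a)
    · simp only [List.cons_append, List.cons.injEq] at hr
      obtain ⟨rfl, rfl⟩ := hr
      have hb' : b ∈ r ++ v := by simpa [hbγ.ne] using hb
      exact (hirr (by simpa using HasSylvFactor.of_mem (p := p) hab hbc hb')).elim

theorem exists_split_of_reflTransGen_sylvStep {w x : List α} {γ : α}
    (hirr : ¬ HasSylvFactor w) (hx : Relation.ReflTransGen SylvStep (γ :: w) x) :
    ∃ u v, x = u ++ γ :: v ∧ w = u ++ v ∧ ∀ a ∈ u, a < γ := by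
  induction hx with
  | refl => exact ⟨[], w, rfl, rfl, by simp⟩
  | tail _ step ih =>
    obtain ⟨u, v, rfl, rfl, hu⟩ := ih
    obtain ⟨p, m, s, a, b, c, hab, hbc, hy, rfl⟩ := step
    obtain ⟨rfl, rfl, rfl⟩ :=
      sylvFactor_starts_at_marked_letter hirr hu hab hbc (by simp) hy
    refine ⟨p ++ [a], m ++ b :: s, by simp, by simp, ?_⟩
    simpa [or_imp, forall_and] using ⟨hu, hab.trans_lt hbc⟩

end Sylvester

/-- Every word reachable from `γw` (with `w` sylvester-irreducible) by sylvester
rewriting has the form `u γ v` with `w = uv` and `γ` greater than every letter of `u`;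
moreover any applicable rule `c a v' b → a c v' b` has `c` equal to the distinguished
occurrence of `γ`, `a` the first letter of `v`, and `b` a later letter of `v`. -/
theorem sylvester_left_multiplication (n : ℕ) (w : List (Fin n)) (γ : Fin n)
    (hirr : ¬ HasSylvFactor w) (x : List (Fin n))
    (hx : Relation.ReflTransGen SylvStep (γ :: w) x) :
    ∃ u v : List (Fin n), x = u ++ γ :: v ∧ w = u ++ v ∧ (∀ a ∈ u, a < γ) ∧
      ∀ (p m s : List (Fin n)) (a b c : Fin n), a ≤ b → b < c →
        x = p ++ c :: a :: (m ++ b :: s) →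
        p = u ∧ c = γ ∧ v = a :: (m ++ b :: s) := by
  obtain ⟨u, v, rfl, rfl, hu⟩ := exists_split_of_reflTransGen_sylvStep hirr hx
  exact ⟨u, v, rfl, rfl, hu, fun p m s a b c hab hbc heq =>
    sylvFactor_starts_at_marked_letter hirr hu hab hbc (by simp) heq⟩
end
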